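/- Let L ≥ 1, d ≥ 1 and let σ be a permutation of {1,…,d}. The d-dimensional S-pattern ordering m_S^σ is a Hamiltonian path in the d-dimensional grid graph: for every k with 0 ≤ k < L^d − 1, the two points v, w ∈ {0,…,L−1}^d with m_S^σ(v) = k and m_S^σ(w) = k+1 satisfy ∑_{i=1}^d |v_i − w_i| = 1, i.e. they differ in exactly one coordinate, by exactly 1. -/

import Mathlib

/-!
Write `D_i(v) = ρ_{s_i(v)}(v_{σ i})`, so that `m_S^σ(v) = ∑ L^i D_i(v)` is a base-`L` expansion.
Since `ρ_r` is an involution of `{0, …, L-1}`, the point `v` is recovered from its digits from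
the top down, so `m_S^σ` is injective on the grid. If `m_S^σ(v) < L^d - 1`, let `i₀` be the
lowest digit below `L - 1`. Moving coordinate `σ i₀` by one in the direction that raises
`D_{i₀}` leaves the higher digits alone and changes the parity of every `s_j` with `j < i₀`,
which turns each of the digits `L - 1` below `i₀` into `0`: this is exactly adding `1` in
base `L`. So this neighbour of `v` has rank `m_S^σ(v) + 1`, and by injectivity it is `w`.
-/

/-- `ρ_r(c) = c` for even `r` and `L−1−c` for odd `r`. -/
def rho (L r c : ℕ) : ℕ := if r % 2 = 0 then c else L - 1 - c

/-- `s_i(v) = ∑_{k > i} v_{σ(k)}` : the sum of the coordinates higher than `i` in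
the dimensional hierarchy `σ`. -/
def sSum (d : ℕ) (σ : Equiv.Perm (Fin d)) (v : Fin d → ℕ) (i : Fin d) : ℕ :=
  ∑ k ∈ Finset.univ.filter (fun k => i < k), v (σ k)

/-- The `d`-dimensional S-pattern ordering
`m_S^σ(v) = ∑_i L^{i} · ρ_{s_i(v)}(v_{σ(i)})` (0-based `i`). -/
def mSd (L d : ℕ) (σ : Equiv.Perm (Fin d)) (v : Fin d → ℕ) : ℕ :=
  ∑ i : Fin d, L ^ (i : ℕ) * rho L (sSum d σ v i) (v (σ i))

open Finset Function

section BaseExpansion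

variable {L d : ℕ}

theorem eq_of_sum_pow_mul_eq {D E : Fin d → ℕ} (hD : ∀ i, D i < L) (hE : ∀ i, E i < L)
    (h : ∑ i : Fin d, L ^ (i : ℕ) * D i = ∑ i : Fin d, L ^ (i : ℕ) * E i) : D = E := by
  have hfin : (fun i => (⟨D i, hD i⟩ : Fin L)) = fun i => ⟨E i, hE i⟩ :=
    finFunctionFinEquiv.injective <| Fin.ext <| by
      simpa only [finFunctionFinEquiv_apply, mul_comm] using h
  funext i
  exact congrArg (fun f => (f i : ℕ)) hfin

theorem sum_pow_mul_fin_succ (D : Fin (d + 1) → ℕ) :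
    ∑ i : Fin (d + 1), L ^ (i : ℕ) * D i = D 0 + L * ∑ i : Fin d, L ^ (i : ℕ) * D i.succ := by
  rw [Fin.sum_univ_succ, mul_sum]
  congr 1
  · simp
  · refine sum_congr rfl fun i _ => ?_
    rw [Fin.val_succ, pow_succ]
    ring

theorem sum_pow_mul_add_one_of_forall {D : Fin d → ℕ} (hD : ∀ i, D i + 1 = L) :
    ∑ i : Fin d, L ^ (i : ℕ) * D i + 1 = L ^ d := by
  induction d with
  | zero => simp
  | succ d ih =>
    rw [sum_pow_mul_fin_succ, pow_succ, ← ih (fun i => hD i.succ), ← hD 0]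
    ring

theorem sum_pow_mul_carry {D E : Fin d → ℕ} (i₀ : Fin d) (hlow : ∀ j < i₀, D j + 1 = L ∧ E j = 0)
    (hmid : E i₀ = D i₀ + 1) (hhigh : ∀ j, i₀ < j → E j = D j) :
    ∑ i : Fin d, L ^ (i : ℕ) * E i = ∑ i : Fin d, L ^ (i : ℕ) * D i + 1 := by
  induction d with
  | zero => exact i₀.elim0
  | succ d ih =>
    rw [sum_pow_mul_fin_succ, sum_pow_mul_fin_succ]
    induction i₀ using Fin.cases with
    | zero =>
      have hrest : ∀ j : Fin d, E j.succ = D j.succ := fun j => hhigh _ j.succ_pos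
      simp only [hmid, hrest]
      ring
    | succ i₀ =>
      obtain ⟨hD0, hE0⟩ := hlow 0 i₀.succ_pos
      rw [ih i₀ (fun j hj => hlow j.succ (Fin.succ_lt_succ_iff.2 hj)) hmid
        (fun j hj => hhigh j.succ (Fin.succ_lt_succ_iff.2 hj)), hE0, ← hD0]
      ring

theorem exists_carry_index {D : Fin d → ℕ} (hD : ∀ i, D i < L)
    (h : ∑ i : Fin d, L ^ (i : ℕ) * D i + 1 < L ^ d) :
    ∃ i₀, D i₀ + 1 < L ∧ ∀ j < i₀, D j + 1 = L := by
  by_cases hs : (univ.filter fun i => D i + 1 < L).Nonempty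
  · obtain ⟨i₀, hi₀, hmin⟩ := (univ.filter fun i => D i + 1 < L).exists_min_image id hs
    refine ⟨i₀, (mem_filter.1 hi₀).2, fun j hj => ?_⟩
    by_contra hne
    exact not_lt.2 (hmin j (mem_filter.2 ⟨mem_univ _, by have := hD j; omega⟩)) hj
  · have hall : ∀ i, D i + 1 = L := fun i => by
      have := hD i
      by_contra hne
      exact hs ⟨i, mem_filter.2 ⟨mem_univ _, by omega⟩⟩
    exact absurd (sum_pow_mul_add_one_of_forall hall ▸ h) (lt_irrefl _)

end BaseExpansion

section Reflection

variable {L r r' c : ℕ}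

theorem rho_lt (hc : c < L) : rho L r c < L := by
  unfold rho; split <;> omega

theorem rho_rho (hc : c < L) : rho L r (rho L r c) = c := by
  unfold rho; split <;> omega

theorem rho_add_rho_of_mod_two_ne (h : r % 2 ≠ r' % 2) (hc : c < L) :
    rho L r c + rho L r' c = L - 1 := by
  unfold rho; split <;> split <;> omega

theorem rho_rho_add_one (hc : c < L) (h : rho L r c + 1 < L) :
    rho L r (rho L r c + 1) = c + 1 ∨ rho L r (rho L r c + 1) + 1 = c := by
  unfold rho at *; split <;> split at h <;> omega

end Reflection

section SPattern

variable {L d : ℕ} {σ : Equiv.Perm (Fin d)} {v w : Fin d → ℕ}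

theorem sSum_congr {i : Fin d} (h : ∀ j, i < j → v (σ j) = w (σ j)) :
    sSum d σ v i = sSum d σ w i :=
  sum_congr rfl fun j hj => h j (mem_filter.1 hj).2

theorem sSum_update_of_le {i j : Fin d} (hij : i ≤ j) (x : ℕ) :
    sSum d σ (update v (σ i) x) j = sSum d σ v j :=
  sSum_congr fun _ hk => update_of_ne (σ.injective.ne (hij.trans_lt hk).ne') _ _

theorem sSum_update_of_lt {i j : Fin d} (hji : j < i) (x : ℕ) :
    sSum d σ (update v (σ i) x) j + v (σ i) = sSum d σ v j + x := by
  classical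
  have hi : i ∈ univ.filter (fun k => j < k) := mem_filter.2 ⟨mem_univ _, hji⟩
  unfold sSum
  rw [← add_sum_erase _ _ hi, ← add_sum_erase _ (fun k => v (σ k)) hi, update_self,
    sum_congr rfl fun k hk => update_of_ne (σ.injective.ne (ne_of_mem_erase hk)) x v]
  ring

def sDigit (L d : ℕ) (σ : Equiv.Perm (Fin d)) (v : Fin d → ℕ) (i : Fin d) : ℕ :=
  rho L (sSum d σ v i) (v (σ i))

theorem mSd_eq_sum_sDigit : mSd L d σ v = ∑ i : Fin d, L ^ (i : ℕ) * sDigit L d σ v i := rfl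

theorem sDigit_lt (hv : ∀ i, v i < L) (i : Fin d) : sDigit L d σ v i < L :=
  rho_lt (hv _)

theorem eq_of_sDigit_eq (hv : ∀ i, v i < L) (hw : ∀ i, w i < L)
    (h : ∀ i, sDigit L d σ v i = sDigit L d σ w i) : v = w := by
  have hσ : ∀ i, v (σ i) = w (σ i) := fun i => by
    induction i using WellFoundedGT.induction with
    | _ i ih =>
      have hi := h i
      rw [sDigit, sDigit, sSum_congr ih] at hi
      rw [← rho_rho (hv (σ i)) (r := sSum d σ w i), hi, rho_rho (hw (σ i))]
  funext j
  simpa using hσ (σ.symm j)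

theorem eq_of_mSd_eq (hv : ∀ i, v i < L) (hw : ∀ i, w i < L) (h : mSd L d σ v = mSd L d σ w) :
    v = w :=
  eq_of_sDigit_eq hv hw <| congrFun <| eq_of_sum_pow_mul_eq (sDigit_lt hv) (sDigit_lt hw) h

def sStep (L d : ℕ) (σ : Equiv.Perm (Fin d)) (v : Fin d → ℕ) (i : Fin d) : Fin d → ℕ :=
  update v (σ i) (rho L (sSum d σ v i) (sDigit L d σ v i + 1))

theorem sStep_lt (hv : ∀ k, v k < L) {i : Fin d} (hi : sDigit L d σ v i + 1 < L) (k : Fin d) :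
    sStep L d σ v i k < L := by
  rcases eq_or_ne k (σ i) with rfl | hk
  · rw [sStep, update_self]; exact rho_lt hi
  · rw [sStep, update_of_ne hk]; exact hv k

theorem sStep_apply_self (hv : ∀ k, v k < L) {i : Fin d} (hi : sDigit L d σ v i + 1 < L) :
    sStep L d σ v i (σ i) = v (σ i) + 1 ∨ sStep L d σ v i (σ i) + 1 = v (σ i) := by
  rw [sStep, update_self]; exact rho_rho_add_one (hv _) hi

theorem sDigit_sStep_self {i : Fin d} (hi : sDigit L d σ v i + 1 < L) :
    sDigit L d σ (sStep L d σ v i) i = sDigit L d σ v i + 1 := by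
  rw [sDigit, sStep, sSum_update_of_le le_rfl, update_self, rho_rho hi]

theorem sDigit_sStep_of_gt {i j : Fin d} (hij : i < j) :
    sDigit L d σ (sStep L d σ v i) j = sDigit L d σ v j := by
  rw [sDigit, sStep, sSum_update_of_le hij.le, update_of_ne (σ.injective.ne hij.ne')]
  rfl

theorem sDigit_sStep_of_lt (hv : ∀ k, v k < L) {i j : Fin d} (hi : sDigit L d σ v i + 1 < L)
    (hji : j < i) (hj : sDigit L d σ v j + 1 = L) :
    sDigit L d σ (sStep L d σ v i) j = 0 := by
  have hshift := sSum_update_of_lt (v := v) (σ := σ) hji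
    (rho L (sSum d σ v i) (sDigit L d σ v i + 1))
  have hadj := rho_rho_add_one (hv (σ i)) hi
  have hparity : sSum d σ v j % 2 ≠ sSum d σ (sStep L d σ v i) j % 2 := by
    rw [sStep]; unfold sDigit at hshift ⊢; omega
  have hcoord : sStep L d σ v i (σ j) = v (σ j) := update_of_ne (σ.injective.ne hji.ne) _ _
  have hsum := rho_add_rho_of_mod_two_ne hparity (hv (σ j))
  rw [sDigit, hcoord]
  unfold sDigit at hj
  omega

theorem mSd_sStep (hv : ∀ k, v k < L) {i : Fin d} (hi : sDigit L d σ v i + 1 < L)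
    (hlow : ∀ j < i, sDigit L d σ v j + 1 = L) :
    mSd L d σ (sStep L d σ v i) = mSd L d σ v + 1 :=
  sum_pow_mul_carry i (fun j hj => ⟨hlow j hj, sDigit_sStep_of_lt hv hi hj (hlow j hj)⟩)
    (sDigit_sStep_self hi) (fun _ hj => sDigit_sStep_of_gt hj)

theorem sum_abs_sub_sStep (hv : ∀ k, v k < L) {i : Fin d} (hi : sDigit L d σ v i + 1 < L) :
    ∑ k : Fin d, |(v k : ℤ) - (sStep L d σ v i k : ℤ)| = 1 := by
  rw [sum_eq_single (σ i) (fun k _ hk => by rw [sStep, update_of_ne hk, sub_self, abs_zero])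
    (fun h => absurd (mem_univ _) h)]
  rcases sStep_apply_self hv hi with h | h
  · rw [h]; push_cast; simp
  · rw [← h]; push_cast; simp

end SPattern

theorem stmt13_general (L d : ℕ) (σ : Equiv.Perm (Fin d))
    (k : ℕ) (hk : k < L ^ d - 1) (v w : Fin d → ℕ)
    (hv : ∀ i, v i < L) (hw : ∀ i, w i < L)
    (hvk : mSd L d σ v = k) (hwk : mSd L d σ w = k + 1) :
    (∑ i : Fin d, |(v i : ℤ) - (w i : ℤ)|) = 1 := by
  obtain ⟨i₀, hi₀, hlow⟩ := exists_carry_index (sDigit_lt (σ := σ) hv) (by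
    rw [← mSd_eq_sum_sDigit, hvk]; omega)
  have hw_eq : w = sStep L d σ v i₀ :=
    eq_of_mSd_eq hw (sStep_lt hv hi₀) (by rw [hwk, mSd_sStep hv hi₀ hlow, hvk])
  exact hw_eq ▸ sum_abs_sub_sStep hv hi₀

/-- The `d`-dimensional S-pattern ordering is a Hamiltonian path in the
`d`-dimensional grid graph: grid points with consecutive ranks `k` and `k+1`
(for `0 ≤ k < L^d − 1`) differ in exactly one coordinate, by exactly `1`. -/
theorem stmt13 (L d : ℕ) (hL : 1 ≤ L) (hd : 1 ≤ d) (σ : Equiv.Perm (Fin d))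
    (k : ℕ) (hk : k < L ^ d - 1) (v w : Fin d → ℕ)
    (hv : ∀ i, v i < L) (hw : ∀ i, w i < L)
    (hvk : mSd L d σ v = k) (hwk : mSd L d σ w = k + 1) :
    (∑ i : Fin d, |(v i : ℤ) - (w i : ℤ)|) = 1 :=
  stmt13_general L d σ k hk v w hv hw hvk hwk
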